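/- arXiv:1309.6113 — 3 statements merged into one kernel-verified Lean document; each statement's English description precedes it below -/
import Mathlib

section
/- For a C² function v on a planar domain with complex gradient f = (v_x - i v_y)/2, at points where f ≠ 0 one has div(|∇v|^{p-2} ∇v) = 2^{p-2} |f|^{p-2} ( 2p f_{\bar z} + (p-2)( (f/\bar f) \overline{f_z} + (\bar f/f) f_z ) ). -/
/-!
Expanding the divergence with the product and chain rules gives
`div(|∇v|^{p-2} ∇v) = |∇v|^{p-4} (|∇v|² Δv + (p-2) ⟨D²v ∇v, ∇v⟩)`.
In Wirtinger terms `|∇v| = 2|f|`, `Δv = 4 f_z̄`, and the quadratic form of the Hessian is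
`⟨D²v ∇v, ∇v⟩ = |∇v|² (2 f_z̄ + 2 Re ((f̄/f) f_z))`; substituting both gives the formula.
-/

open Complex

theorem HasDerivAt.rpow_sq_add_sq_mul {g₁ g₂ h : ℝ → ℝ} {d₁ d₂ e x : ℝ} (k : ℝ)
    (hg₁ : HasDerivAt g₁ d₁ x) (hg₂ : HasDerivAt g₂ d₂ x) (hh : HasDerivAt h e x)
    (hx : g₁ x ^ 2 + g₂ x ^ 2 ≠ 0) :
    HasDerivAt (fun t => (g₁ t ^ 2 + g₂ t ^ 2) ^ k * h t)
      ((g₁ x ^ 2 + g₂ x ^ 2) ^ (k - 1)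
        * (2 * k * (g₁ x * d₁ + g₂ x * d₂) * h x + (g₁ x ^ 2 + g₂ x ^ 2) * e)) x := by
  have hsq : HasDerivAt (fun t => g₁ t ^ 2 + g₂ t ^ 2) (2 * (g₁ x * d₁ + g₂ x * d₂)) x := by
    refine ((hg₁.fun_pow 2).fun_add (hg₂.fun_pow 2)).congr_deriv ?_
    norm_num
    ring
  refine ((hsq.rpow_const (p := k) (Or.inl hx)).mul hh).congr_deriv ?_
  rw [Real.rpow_sub_one hx]
  field_simp

theorem Complex.normSq_ofReal_sub_I_mul (q r : ℝ) :
    normSq ((q : ℂ) - I * r) = q ^ 2 + r ^ 2 := by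
  have h : (q : ℂ) - I * r = q + (-r : ℝ) * I := by
    push_cast
    ring
  rw [h, normSq_add_mul_I, neg_sq]

theorem Complex.two_rpow_mul_norm_ofReal_sub_I_mul_div_two_rpow (e q r : ℝ) :
    (2 : ℝ) ^ e * ‖((q : ℂ) - I * r) / 2‖ ^ e = (q ^ 2 + r ^ 2) ^ (e / 2) := by
  rw [norm_div, Complex.norm_two, ← Real.mul_rpow zero_le_two (by positivity),
    mul_div_cancel₀ _ two_ne_zero, norm_def, normSq_ofReal_sub_I_mul, Real.sqrt_eq_rpow,
    ← Real.rpow_mul (by positivity)]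
  ring_nf

theorem hessian_quadratic_form_eq_wirtinger (q r s t u : ℝ) (f fz fzb : ℂ)
    (hf : f = ((q : ℂ) - I * r) / 2)
    (hfz : fz = ((s : ℂ) - u - 2 * I * t) / 4) (hfzb : fzb = ((s : ℂ) + u) / 4) :
    ((q ^ 2 * s + 2 * q * r * t + r ^ 2 * u : ℝ) : ℂ)
      = ((q ^ 2 + r ^ 2 : ℝ) : ℂ)
        * (2 * fzb + (f / starRingEnd ℂ f * starRingEnd ℂ fz + starRingEnd ℂ f / f * fz)) := by
  have hcf : starRingEnd ℂ f = ((q : ℂ) + I * r) / 2 := by simp [hf, map_ofNat]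
  have hnormSq : ((q ^ 2 + r ^ 2 : ℝ) : ℂ) = 4 * (f * starRingEnd ℂ f) := by
    rw [hcf, hf]
    push_cast
    linear_combination (r : ℂ) ^ 2 * I_sq
  rcases eq_or_ne f 0 with rfl | hf0
  · rw [zero_mul, mul_zero, ofReal_eq_zero] at hnormSq
    obtain ⟨rfl, rfl⟩ : q = 0 ∧ r = 0 := by constructor <;> nlinarith
    simp
  have hcf0 : starRingEnd ℂ f ≠ 0 := by simpa using hf0
  have hcfz : starRingEnd ℂ fz = ((s : ℂ) - u + 2 * I * t) / 4 := by simp [hfz, map_ofNat]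
  rw [hnormSq]
  push_cast
  field_simp
  rw [hcf, hcfz, hf, hfz, hfzb]
  ring_nf
  rw [I_sq]
  ring

theorem p_laplacian_complex_representation_general
    (p : ℝ)
    (vx vy vxx vxy vyy : ℝ → ℝ → ℝ)
    (hvxx : ∀ x y, HasDerivAt (fun t => vx t y) (vxx x y) x)
    (hvxy : ∀ x y, HasDerivAt (fun t => vx x t) (vxy x y) y)
    (hvyx : ∀ x y, HasDerivAt (fun t => vy t y) (vxy x y) x)
    (hvyy : ∀ x y, HasDerivAt (fun t => vy x t) (vyy x y) y)
    (x y : ℝ) (f fz fzb : ℂ)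
    (hf : f = ((vx x y : ℂ) - Complex.I * (vy x y : ℂ)) / 2)
    (hf0 : f ≠ 0)
    (hfz : fz = ((vxx x y : ℂ) - (vyy x y : ℂ) - 2 * Complex.I * (vxy x y : ℂ)) / 4)
    (hfzb : fzb = ((vxx x y : ℂ) + (vyy x y : ℂ)) / 4)
    (a b : ℝ)
    (ha : HasDerivAt (fun t => ((vx t y) ^ 2 + (vy t y) ^ 2) ^ ((p - 2) / 2) * vx t y) a x)
    (hb : HasDerivAt (fun t => ((vx x t) ^ 2 + (vy x t) ^ 2) ^ ((p - 2) / 2) * vy x t) b y) :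
    ((a + b : ℝ) : ℂ)
      = (((2 : ℝ) ^ (p - 2) * ‖f‖ ^ (p - 2) : ℝ) : ℂ)
        * (2 * (p : ℂ) * fzb
          + ((p : ℂ) - 2) * ((f / (starRingEnd ℂ) f) * (starRingEnd ℂ) fz
              + ((starRingEnd ℂ) f / f) * fz)) := by
  have hW : vx x y ^ 2 + vy x y ^ 2 ≠ 0 := by
    rw [← normSq_ofReal_sub_I_mul, normSq_eq_zero.ne]
    exact (div_ne_zero_iff.mp (hf ▸ hf0)).1
  have ha' := ha.unique ((hvxx x y).rpow_sq_add_sq_mul ((p - 2) / 2) (hvyx x y) (hvxx x y) hW)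
  have hb' := hb.unique ((hvxy x y).rpow_sq_add_sq_mul ((p - 2) / 2) (hvyy x y) (hvyy x y) hW)
  have hQ := hessian_quadratic_form_eq_wirtinger _ _ _ _ _ f fz fzb hf hfz hfzb
  rw [ha', hb', hf, two_rpow_mul_norm_ofReal_sub_I_mul_div_two_rpow, ← hf]
  set W := vx x y ^ 2 + vy x y ^ 2
  have hpow : W ^ ((p - 2) / 2) = W ^ ((p - 2) / 2 - 1) * W := by
    rw [Real.rpow_sub_one hW, div_mul_cancel₀ _ hW]
  rw [hpow]
  push_cast at hQ ⊢
  linear_combination (W ^ ((p - 2) / 2 - 1) : ℝ) * ((p - 2) * hQ - 4 * W * hfzb)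

/-- For a C² function `v` on a planar domain with complex gradient
`f = (v_x - i v_y)/2`, at points where `f ≠ 0` one has
`div(|∇v|^{p-2} ∇v) = 2^{p-2} |f|^{p-2} (2p f_z̄ + (p-2)((f/conj f) conj f_z + (conj f/f) f_z))`.
The divergence is represented as `a + b` as in the p-Laplacian statement; by C²
regularity `f_z = (v_xx - v_yy - 2 i v_xy)/4` and `f_z̄ = Δv/4`. -/
theorem p_laplacian_complex_representation
    (p : ℝ) (hp : 1 < p)
    (v vx vy vxx vxy vyy : ℝ → ℝ → ℝ)
    (hvx : ∀ x y, HasDerivAt (fun t => v t y) (vx x y) x)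
    (hvy : ∀ x y, HasDerivAt (fun t => v x t) (vy x y) y)
    (hvxx : ∀ x y, HasDerivAt (fun t => vx t y) (vxx x y) x)
    (hvxy : ∀ x y, HasDerivAt (fun t => vx x t) (vxy x y) y)
    (hvyx : ∀ x y, HasDerivAt (fun t => vy t y) (vxy x y) x)
    (hvyy : ∀ x y, HasDerivAt (fun t => vy x t) (vyy x y) y)
    (x y : ℝ) (f fz fzb : ℂ)
    (hf : f = ((vx x y : ℂ) - Complex.I * (vy x y : ℂ)) / 2)
    (hf0 : f ≠ 0)
    (hfz : fz = ((vxx x y : ℂ) - (vyy x y : ℂ) - 2 * Complex.I * (vxy x y : ℂ)) / 4)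
    (hfzb : fzb = ((vxx x y : ℂ) + (vyy x y : ℂ)) / 4)
    (a b : ℝ)
    (ha : HasDerivAt (fun t => ((vx t y) ^ 2 + (vy t y) ^ 2) ^ ((p - 2) / 2) * vx t y) a x)
    (hb : HasDerivAt (fun t => ((vx x t) ^ 2 + (vy x t) ^ 2) ^ ((p - 2) / 2) * vy x t) b y) :
    ((a + b : ℝ) : ℂ)
      = (((2 : ℝ) ^ (p - 2) * ‖f‖ ^ (p - 2) : ℝ) : ℂ)
        * (2 * (p : ℂ) * fzb
          + ((p : ℂ) - 2) * ((f / (starRingEnd ℂ) f) * (starRingEnd ℂ) fz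
              + ((starRingEnd ℂ) f / f) * fz)) :=
  p_laplacian_complex_representation_general p vx vy vxx vxy vyy hvxx hvxy hvyx hvyy x y f fz fzb hf
    hf0 hfz hfzb a b ha hb
end

section
/- Let u = (u¹, u²) be a C² p-harmonic map on a planar domain, i.e., div(|Du|^{p-2} ∇u¹) = 0 and div(|Du|^{p-2} ∇u²) = 0 where |Du|² = |∇u¹|² + |∇u²|². Then at points where ∇u¹ ≠ 0 and ∇u² ≠ 0: |∇u¹|^{4-p} Δ_p u¹ + |∇u²|² Δu¹ + ((p-2)/2) ⟨∇u¹, ∇|∇u²|²⟩ = 0, and symmetrically with indices 1 and 2 swapped. -/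
/-!
Write `q = (p - 2) / 2`, `S = |∇u¹|²`, `T = |∇u²|²`, so that `|Du|² = S + T`. For a positive
weight `s`, the product rule gives `s^(1-q) div(s^q ∇v) = q ⟨∇s, ∇v⟩ + s Δv`. Applied with
`s = S + T` to the p-harmonic system this yields `q ⟨∇(S + T), ∇u¹⟩ + (S + T) Δu¹ = 0`, and
applied with `s = S` it identifies `S^(1-q) Δ_p u¹ = q ⟨∇S, ∇u¹⟩ + S Δu¹`. Subtracting, the
terms in `S` cancel and what is left is the claimed identity; the second one is symmetric.
-/

lemma hasDerivAt_sq_add_sq {f g : ℝ → ℝ} {f' g' t : ℝ} (hf : HasDerivAt f f' t)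
    (hg : HasDerivAt g g' t) :
    HasDerivAt (fun τ => f τ ^ 2 + g τ ^ 2) (2 * f t * f' + 2 * g t * g') t := by
  refine ((hf.pow 2).add (hg.pow 2)).congr_deriv ?_
  push_cast
  ring

lemma rpow_one_sub_mul_eq_of_hasDerivAt_rpow_mul {s v : ℝ → ℝ} {s' v' a t : ℝ} (q : ℝ)
    (hs : HasDerivAt s s' t) (hv : HasDerivAt v v' t) (hpos : 0 < s t)
    (ha : HasDerivAt (fun τ => s τ ^ q * v τ) a t) :
    s t ^ (1 - q) * a = q * s' * v t + s t * v' := by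
  have h₀ : s t ^ (1 - q) * s t ^ (q - 1) = 1 := by
    rw [← Real.rpow_add hpos, sub_add_sub_cancel', sub_self, Real.rpow_zero]
  have h₁ : s t ^ (1 - q) * s t ^ q = s t := by
    rw [← Real.rpow_add hpos, sub_add_cancel, Real.rpow_one]
  rw [ha.unique ((hs.rpow_const (Or.inl hpos.ne')).mul hv)]
  linear_combination q * s' * v t * h₀ + v' * h₁

lemma rpow_one_sub_mul_divergence_eq {s ux uy : ℝ → ℝ → ℝ} {sx sy uxx uyy a b x y : ℝ}
    (q : ℝ) (hsx : HasDerivAt (fun t => s t y) sx x) (hsy : HasDerivAt (fun t => s x t) sy y)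
    (huxx : HasDerivAt (fun t => ux t y) uxx x) (huyy : HasDerivAt (fun t => uy x t) uyy y)
    (hpos : 0 < s x y)
    (ha : HasDerivAt (fun t => s t y ^ q * ux t y) a x)
    (hb : HasDerivAt (fun t => s x t ^ q * uy x t) b y) :
    s x y ^ (1 - q) * (a + b) = q * (sx * ux x y + sy * uy x y) + s x y * (uxx + uyy) := by
  have hx := rpow_one_sub_mul_eq_of_hasDerivAt_rpow_mul q hsx huxx hpos ha
  have hy := rpow_one_sub_mul_eq_of_hasDerivAt_rpow_mul q hsy huyy hpos hb
  linear_combination hx + hy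

theorem p_harmonic_component_identity (q : ℝ) (W : ℝ → ℝ → ℝ) {ux uy vx vy : ℝ → ℝ → ℝ}
    {uxx uxy uyx uyy vxx vxy vyy x y c d : ℝ}
    (huxx : HasDerivAt (fun t => ux t y) uxx x) (huxy : HasDerivAt (fun t => ux x t) uxy y)
    (huyx : HasDerivAt (fun t => uy t y) uyx x) (huyy : HasDerivAt (fun t => uy x t) uyy y)
    (hvxx : HasDerivAt (fun t => vx t y) vxx x) (hvxy : HasDerivAt (fun t => vx x t) vxy y)
    (hvyx : HasDerivAt (fun t => vy t y) vxy x) (hvyy : HasDerivAt (fun t => vy x t) vyy y)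
    (hW : ∀ x y, W x y = ux x y ^ 2 + uy x y ^ 2 + (vx x y ^ 2 + vy x y ^ 2))
    (hdiv : ∀ a b : ℝ, HasDerivAt (fun t => W t y ^ q * ux t y) a x →
      HasDerivAt (fun t => W x t ^ q * uy x t) b y → a + b = 0)
    (hu : ¬(ux x y = 0 ∧ uy x y = 0))
    (hc : HasDerivAt (fun t => (ux t y ^ 2 + uy t y ^ 2) ^ q * ux t y) c x)
    (hd : HasDerivAt (fun t => (ux x t ^ 2 + uy x t ^ 2) ^ q * uy x t) d y) :
    (ux x y ^ 2 + uy x y ^ 2) ^ (1 - q) * (c + d)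
      + (vx x y ^ 2 + vy x y ^ 2) * (uxx + uyy)
      + q * (ux x y * (2 * vx x y * vxx + 2 * vy x y * vxy)
        + uy x y * (2 * vx x y * vxy + 2 * vy x y * vyy)) = 0 := by
  have hSpos : 0 < ux x y ^ 2 + uy x y ^ 2 := by
    rcases not_and_or.mp hu with h | h <;> positivity
  have hWpos : 0 < W x y := hW x y ▸ add_pos_of_pos_of_nonneg hSpos (by positivity)
  have hSx := hasDerivAt_sq_add_sq huxx huyx
  have hSy := hasDerivAt_sq_add_sq huxy huyy
  have hWx := (hSx.add (hasDerivAt_sq_add_sq hvxx hvyx)).congr_of_eventuallyEq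
    (.of_forall fun t => hW t y)
  have hWy := (hSy.add (hasDerivAt_sq_add_sq hvxy hvyy)).congr_of_eventuallyEq
    (.of_forall fun t => hW x t)
  have hfx := (hWx.rpow_const (p := q) (Or.inl hWpos.ne')).mul huxx
  have hfy := (hWy.rpow_const (p := q) (Or.inl hWpos.ne')).mul huyy
  have hWeq := rpow_one_sub_mul_divergence_eq q hWx hWy huxx huyy hWpos hfx hfy
  have hSeq := rpow_one_sub_mul_divergence_eq (s := fun x y => ux x y ^ 2 + uy x y ^ 2) q
    hSx hSy huxx huyy hSpos hc hd
  rw [hdiv _ _ hfx hfy, mul_zero, hW x y] at hWeq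
  linear_combination hSeq - hWeq

theorem p_harmonic_system_representation_general
    (p : ℝ)
    (u1x u1y u1xx u1xy u1yy u2x u2y u2xx u2xy u2yy : ℝ → ℝ → ℝ)
    (hu1xx : ∀ x y, HasDerivAt (fun t => u1x t y) (u1xx x y) x)
    (hu1xy : ∀ x y, HasDerivAt (fun t => u1x x t) (u1xy x y) y)
    (hu1yx : ∀ x y, HasDerivAt (fun t => u1y t y) (u1xy x y) x)
    (hu1yy : ∀ x y, HasDerivAt (fun t => u1y x t) (u1yy x y) y)
    (hu2xx : ∀ x y, HasDerivAt (fun t => u2x t y) (u2xx x y) x)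
    (hu2xy : ∀ x y, HasDerivAt (fun t => u2x x t) (u2xy x y) y)
    (hu2yx : ∀ x y, HasDerivAt (fun t => u2y t y) (u2xy x y) x)
    (hu2yy : ∀ x y, HasDerivAt (fun t => u2y x t) (u2yy x y) y)
    -- p-harmonicity of u = (u¹,u²): div(|Du|^{p-2}∇u¹) = 0 and div(|Du|^{p-2}∇u²) = 0
    (hph1 : ∀ x y, ∀ a b : ℝ,
      HasDerivAt (fun t => ((u1x t y) ^ 2 + (u1y t y) ^ 2 + (u2x t y) ^ 2 + (u2y t y) ^ 2)
        ^ ((p - 2) / 2) * u1x t y) a x →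
      HasDerivAt (fun t => ((u1x x t) ^ 2 + (u1y x t) ^ 2 + (u2x x t) ^ 2 + (u2y x t) ^ 2)
        ^ ((p - 2) / 2) * u1y x t) b y → a + b = 0)
    (hph2 : ∀ x y, ∀ a b : ℝ,
      HasDerivAt (fun t => ((u1x t y) ^ 2 + (u1y t y) ^ 2 + (u2x t y) ^ 2 + (u2y t y) ^ 2)
        ^ ((p - 2) / 2) * u2x t y) a x →
      HasDerivAt (fun t => ((u1x x t) ^ 2 + (u1y x t) ^ 2 + (u2x x t) ^ 2 + (u2y x t) ^ 2)
        ^ ((p - 2) / 2) * u2y x t) b y → a + b = 0)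
    (x y : ℝ)
    (h01 : ¬(u1x x y = 0 ∧ u1y x y = 0)) (h02 : ¬(u2x x y = 0 ∧ u2y x y = 0)) :
    (∀ c d : ℝ,
      HasDerivAt (fun t => ((u1x t y) ^ 2 + (u1y t y) ^ 2) ^ ((p - 2) / 2) * u1x t y) c x →
      HasDerivAt (fun t => ((u1x x t) ^ 2 + (u1y x t) ^ 2) ^ ((p - 2) / 2) * u1y x t) d y →
      ((u1x x y) ^ 2 + (u1y x y) ^ 2) ^ ((4 - p) / 2) * (c + d)
        + ((u2x x y) ^ 2 + (u2y x y) ^ 2) * (u1xx x y + u1yy x y)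
        + (p - 2) / 2
          * (u1x x y * (2 * u2x x y * u2xx x y + 2 * u2y x y * u2xy x y)
            + u1y x y * (2 * u2x x y * u2xy x y + 2 * u2y x y * u2yy x y)) = 0)
    ∧ (∀ c d : ℝ,
      HasDerivAt (fun t => ((u2x t y) ^ 2 + (u2y t y) ^ 2) ^ ((p - 2) / 2) * u2x t y) c x →
      HasDerivAt (fun t => ((u2x x t) ^ 2 + (u2y x t) ^ 2) ^ ((p - 2) / 2) * u2y x t) d y →
      ((u2x x y) ^ 2 + (u2y x y) ^ 2) ^ ((4 - p) / 2) * (c + d)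
        + ((u1x x y) ^ 2 + (u1y x y) ^ 2) * (u2xx x y + u2yy x y)
        + (p - 2) / 2
          * (u2x x y * (2 * u1x x y * u1xx x y + 2 * u1y x y * u1xy x y)
            + u2y x y * (2 * u1x x y * u1xy x y + 2 * u1y x y * u1yy x y)) = 0) := by
  let W : ℝ → ℝ → ℝ := fun x y => u1x x y ^ 2 + u1y x y ^ 2 + u2x x y ^ 2 + u2y x y ^ 2
  rw [show (4 - p) / 2 = 1 - (p - 2) / 2 by ring]
  exact ⟨fun c d hc hd => p_harmonic_component_identity _ W (hu1xx x y) (hu1xy x y)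
      (hu1yx x y) (hu1yy x y) (hu2xx x y) (hu2xy x y) (hu2yx x y) (hu2yy x y)
      (fun _ _ => add_assoc _ _ _) (hph1 x y) h01 hc hd,
    fun c d hc hd => p_harmonic_component_identity _ W (hu2xx x y) (hu2xy x y)
      (hu2yx x y) (hu2yy x y) (hu1xx x y) (hu1xy x y) (hu1yx x y) (hu1yy x y)
      (fun _ _ => by ring) (hph2 x y) h02 hc hd⟩

/-- Let `u = (u¹, u²)` be a C² p-harmonic map on a planar domain, i.e.
`div(|Du|^{p-2} ∇u¹) = 0` and `div(|Du|^{p-2} ∇u²) = 0` where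
`|Du|² = |∇u¹|² + |∇u²|²`. Then at points where `∇u¹ ≠ 0` and `∇u² ≠ 0`:
`|∇u¹|^{4-p} Δ_p u¹ + |∇u²|² Δu¹ + ((p-2)/2) ⟨∇u¹, ∇|∇u²|²⟩ = 0`,
and symmetrically with the indices 1 and 2 swapped.  Divergences are
represented as sums of the partial derivatives of the flux components. -/
theorem p_harmonic_system_representation
    (p : ℝ) (hp : 1 < p)
    (u1 u1x u1y u1xx u1xy u1yy u2 u2x u2y u2xx u2xy u2yy : ℝ → ℝ → ℝ)
    (hu1x : ∀ x y, HasDerivAt (fun t => u1 t y) (u1x x y) x)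
    (hu1y : ∀ x y, HasDerivAt (fun t => u1 x t) (u1y x y) y)
    (hu1xx : ∀ x y, HasDerivAt (fun t => u1x t y) (u1xx x y) x)
    (hu1xy : ∀ x y, HasDerivAt (fun t => u1x x t) (u1xy x y) y)
    (hu1yx : ∀ x y, HasDerivAt (fun t => u1y t y) (u1xy x y) x)
    (hu1yy : ∀ x y, HasDerivAt (fun t => u1y x t) (u1yy x y) y)
    (hu2x : ∀ x y, HasDerivAt (fun t => u2 t y) (u2x x y) x)
    (hu2y : ∀ x y, HasDerivAt (fun t => u2 x t) (u2y x y) y)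
    (hu2xx : ∀ x y, HasDerivAt (fun t => u2x t y) (u2xx x y) x)
    (hu2xy : ∀ x y, HasDerivAt (fun t => u2x x t) (u2xy x y) y)
    (hu2yx : ∀ x y, HasDerivAt (fun t => u2y t y) (u2xy x y) x)
    (hu2yy : ∀ x y, HasDerivAt (fun t => u2y x t) (u2yy x y) y)
    -- p-harmonicity of u = (u¹,u²): div(|Du|^{p-2}∇u¹) = 0 and div(|Du|^{p-2}∇u²) = 0
    (hph1 : ∀ x y, ∀ a b : ℝ,
      HasDerivAt (fun t => ((u1x t y) ^ 2 + (u1y t y) ^ 2 + (u2x t y) ^ 2 + (u2y t y) ^ 2)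
        ^ ((p - 2) / 2) * u1x t y) a x →
      HasDerivAt (fun t => ((u1x x t) ^ 2 + (u1y x t) ^ 2 + (u2x x t) ^ 2 + (u2y x t) ^ 2)
        ^ ((p - 2) / 2) * u1y x t) b y → a + b = 0)
    (hph2 : ∀ x y, ∀ a b : ℝ,
      HasDerivAt (fun t => ((u1x t y) ^ 2 + (u1y t y) ^ 2 + (u2x t y) ^ 2 + (u2y t y) ^ 2)
        ^ ((p - 2) / 2) * u2x t y) a x →
      HasDerivAt (fun t => ((u1x x t) ^ 2 + (u1y x t) ^ 2 + (u2x x t) ^ 2 + (u2y x t) ^ 2)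
        ^ ((p - 2) / 2) * u2y x t) b y → a + b = 0)
    (x y : ℝ)
    (h01 : ¬(u1x x y = 0 ∧ u1y x y = 0)) (h02 : ¬(u2x x y = 0 ∧ u2y x y = 0)) :
    (∀ c d : ℝ,
      HasDerivAt (fun t => ((u1x t y) ^ 2 + (u1y t y) ^ 2) ^ ((p - 2) / 2) * u1x t y) c x →
      HasDerivAt (fun t => ((u1x x t) ^ 2 + (u1y x t) ^ 2) ^ ((p - 2) / 2) * u1y x t) d y →
      ((u1x x y) ^ 2 + (u1y x y) ^ 2) ^ ((4 - p) / 2) * (c + d)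
        + ((u2x x y) ^ 2 + (u2y x y) ^ 2) * (u1xx x y + u1yy x y)
        + (p - 2) / 2
          * (u1x x y * (2 * u2x x y * u2xx x y + 2 * u2y x y * u2xy x y)
            + u1y x y * (2 * u2x x y * u2xy x y + 2 * u2y x y * u2yy x y)) = 0)
    ∧ (∀ c d : ℝ,
      HasDerivAt (fun t => ((u2x t y) ^ 2 + (u2y t y) ^ 2) ^ ((p - 2) / 2) * u2x t y) c x →
      HasDerivAt (fun t => ((u2x x t) ^ 2 + (u2y x t) ^ 2) ^ ((p - 2) / 2) * u2y x t) d y →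
      ((u2x x y) ^ 2 + (u2y x y) ^ 2) ^ ((4 - p) / 2) * (c + d)
        + ((u1x x y) ^ 2 + (u1y x y) ^ 2) * (u2xx x y + u2yy x y)
        + (p - 2) / 2
          * (u2x x y * (2 * u1x x y * u1xx x y + 2 * u1y x y * u1xy x y)
            + u2y x y * (2 * u1x x y * u1xy x y + 2 * u1y x y * u1yy x y)) = 0) :=
  p_harmonic_system_representation_general p u1x u1y u1xx u1xy u1yy u2x u2y u2xx u2xy u2yy hu1xx
    hu1xy hu1yx hu1yy hu2xx hu2xy hu2yx hu2yy hph1 hph2 x y h01 h02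
end

section
/- Let v be a C² function with complex gradient f = (v_x − i v_y)/2, and suppose f ≠ 0 at a point. Then the level-curve curvature satisfies 2|f| k_v = −2 f_{\bar z} + (f/\bar f) \overline{f_z} + (\bar f/f) f_z. In particular |f| |k_v| ≤ |f_{\bar z}| + |f_z|. -/
/-!
Since `f / conj f = f² / |f|²`, the combination `(f / conj f) conj f_z + (conj f / f) f_z` equals
`2 Re(f² conj f_z) / |f|²`, a real number. Expanded in the second derivatives of `v`, adding
`-2 f_z̄` to it leaves `-(v_y² v_xx - 2 v_x v_y v_xy + v_x² v_yy) / |∇v|²`, which is `2|f| k_v`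
because `2|f| = |∇v|`. The inequality is the triangle inequality, `f / conj f` being unimodular.
-/

open Complex ComplexConjugate

theorem div_conj_mul_conj_add_conj_div_mul (f w : ℂ) :
    f / conj f * conj w + conj f / f * w = ((2 * (f ^ 2 * conj w).re / normSq f : ℝ) : ℂ) := by
  have hu : f / conj f = f ^ 2 / normSq f := by
    rcases eq_or_ne f 0 with rfl | hf
    · simp
    rw [← mul_conj]; field_simp
  have hc : conj f / f * w = conj (f / conj f * conj w) := by simp
  rw [hc, add_conj, hu, div_mul_eq_mul_div, div_ofReal_re]
  push_cast; ring

theorem norm_neg_two_mul_add_div_conj_le (f w z : ℂ) :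
    ‖-2 * z + f / conj f * conj w + conj f / f * w‖ ≤ 2 * ‖z‖ + 2 * ‖w‖ := by
  have hu : ‖f / conj f‖ ≤ 1 := by rw [norm_div, norm_conj]; exact div_self_le_one _
  have hu' : ‖conj f / f‖ ≤ 1 := by rw [norm_div, norm_conj]; exact div_self_le_one _
  calc ‖-2 * z + f / conj f * conj w + conj f / f * w‖
      ≤ ‖-2 * z‖ + ‖f / conj f‖ * ‖conj w‖ + ‖conj f / f‖ * ‖w‖ := by
        refine norm_add₃_le.trans ?_
        rw [norm_mul _ (conj w), norm_mul _ w]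
    _ ≤ 2 * ‖z‖ + 1 * ‖w‖ + 1 * ‖w‖ := by
        rw [norm_mul, norm_conj]; gcongr; simp
    _ = 2 * ‖z‖ + 2 * ‖w‖ := by ring

theorem two_mul_norm_sub_I_mul_div_two (a b : ℝ) :
    2 * ‖((a : ℂ) - I * b) / 2‖ = √(a ^ 2 + b ^ 2) := by
  rw [norm_div, norm_def, normSq_apply]
  simp [sq, mul_div_cancel₀]

theorem curvature_combination_eq {a b p q r : ℝ} {f fz fzb : ℂ}
    (hf : f = ((a : ℂ) - I * b) / 2) (hfz : fz = ((p : ℂ) - r - 2 * I * q) / 4)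
    (hfzb : fzb = ((p : ℂ) + r) / 4) (hab : a ^ 2 + b ^ 2 ≠ 0) :
    -2 * fzb + f / conj f * conj fz + conj f / f * fz
      = (-((b ^ 2 * p - 2 * a * b * q + a ^ 2 * r) / (a ^ 2 + b ^ 2)) : ℝ) := by
  have hlap : -2 * fzb = (-(p + r) / 2 : ℝ) := by rw [hfzb]; push_cast; ring
  have hre : (f ^ 2 * conj fz).re = ((a ^ 2 - b ^ 2) * (p - r) + 4 * a * b * q) / 16 := by
    simp [hf, hfz, pow_two, map_ofNat]; ring
  have hnormSq : normSq f = (a ^ 2 + b ^ 2) / 4 := by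
    simp [hf, normSq_apply]; ring
  rw [add_assoc, div_conj_mul_conj_add_conj_div_mul, hlap, hre, hnormSq, ← ofReal_add]
  congr 1
  field_simp
  ring

theorem level_curve_curvature_complex_general
    (vx vy vxx vxy vyy : ℝ → ℝ → ℝ)
    (x y : ℝ) (f fz fzb : ℂ)
    (hf : f = ((vx x y : ℂ) - Complex.I * (vy x y : ℂ)) / 2)
    (hf0 : f ≠ 0)
    (hfz : fz = ((vxx x y : ℂ) - (vyy x y : ℂ) - 2 * Complex.I * (vxy x y : ℂ)) / 4)
    (hfzb : fzb = ((vxx x y : ℂ) + (vyy x y : ℂ)) / 4)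
    (k : ℝ)
    (hk : k = -(((vy x y) ^ 2 * vxx x y - 2 * vx x y * vy x y * vxy x y
        + (vx x y) ^ 2 * vyy x y) / (Real.sqrt ((vx x y) ^ 2 + (vy x y) ^ 2)) ^ 3)) :
    ((2 * ‖f‖ * k : ℝ) : ℂ)
        = -2 * fzb + (f / (starRingEnd ℂ) f) * (starRingEnd ℂ) fz
          + ((starRingEnd ℂ) f / f) * fz
    ∧ ‖f‖ * |k| ≤ ‖fzb‖ + ‖fz‖ := by
  set s := √(vx x y ^ 2 + vy x y ^ 2)
  have hs : 2 * ‖f‖ = s := hf ▸ two_mul_norm_sub_I_mul_div_two _ _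
  have hs0 : 0 < s := hs ▸ mul_pos two_pos (norm_pos_iff.mpr hf0)
  have hgrad : vx x y ^ 2 + vy x y ^ 2 ≠ 0 := (Real.sqrt_pos.mp hs0).ne'
  have hs2 : s ^ 2 = vx x y ^ 2 + vy x y ^ 2 := Real.sq_sqrt (by positivity)
  have hidentity : ((2 * ‖f‖ * k : ℝ) : ℂ)
      = -2 * fzb + f / conj f * conj fz + conj f / f * fz := by
    rw [curvature_combination_eq hf hfz hfzb hgrad, hs, hk, ← hs2]
    congr 1
    field_simp
  refine ⟨hidentity, ?_⟩
  have hbound := norm_neg_two_mul_add_div_conj_le f fz fzb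
  rw [← hidentity, norm_real, Real.norm_eq_abs, abs_mul, abs_of_nonneg (by positivity)] at hbound
  linarith

/-- Let `v` be C² with complex gradient `f = (v_x − i v_y)/2 ≠ 0` at a point.
Then the level-curve curvature satisfies
`2|f| k_v = −2 f_z̄ + (f/conj f) conj f_z + (conj f/f) f_z`.
In particular `|f| |k_v| ≤ |f_z̄| + |f_z|`. -/
theorem level_curve_curvature_complex
    (v vx vy vxx vxy vyy : ℝ → ℝ → ℝ)
    (hvx : ∀ x y, HasDerivAt (fun t => v t y) (vx x y) x)
    (hvy : ∀ x y, HasDerivAt (fun t => v x t) (vy x y) y)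
    (hvxx : ∀ x y, HasDerivAt (fun t => vx t y) (vxx x y) x)
    (hvxy : ∀ x y, HasDerivAt (fun t => vx x t) (vxy x y) y)
    (hvyx : ∀ x y, HasDerivAt (fun t => vy t y) (vxy x y) x)
    (hvyy : ∀ x y, HasDerivAt (fun t => vy x t) (vyy x y) y)
    (x y : ℝ) (f fz fzb : ℂ)
    (hf : f = ((vx x y : ℂ) - Complex.I * (vy x y : ℂ)) / 2)
    (hf0 : f ≠ 0)
    (hfz : fz = ((vxx x y : ℂ) - (vyy x y : ℂ) - 2 * Complex.I * (vxy x y : ℂ)) / 4)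
    (hfzb : fzb = ((vxx x y : ℂ) + (vyy x y : ℂ)) / 4)
    (k : ℝ)
    (hk : k = -(((vy x y) ^ 2 * vxx x y - 2 * vx x y * vy x y * vxy x y
        + (vx x y) ^ 2 * vyy x y) / (Real.sqrt ((vx x y) ^ 2 + (vy x y) ^ 2)) ^ 3)) :
    ((2 * ‖f‖ * k : ℝ) : ℂ)
        = -2 * fzb + (f / (starRingEnd ℂ) f) * (starRingEnd ℂ) fz
          + ((starRingEnd ℂ) f / f) * fz
    ∧ ‖f‖ * |k| ≤ ‖fzb‖ + ‖fz‖ :=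
  level_curve_curvature_complex_general vx vy vxx vxy vyy x y f fz fzb hf hf0 hfz hfzb k hk
end
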